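/- arXiv:2512.17448 — 2 statements merged into one kernel-verified Lean document; each statement's English description precedes it below -/
import Mathlib

section
/- Fix γ > 0 and 1 ≤ p ≤ ∞. For every f ∈ C^∞([0,γ]) and every ε > 0 there exists a finite set F ⊂ ℝ with 2 ≤ #F < ∞ such that the ρ_p-distance from f to E_F satisfies inf_{g ∈ E_F} ρ_p(f,g) < ε. In other words, the union of the d/dx-invariant sets E_F over all finite F ⊂ ℝ with #F ≥ 2 is dense in (C^∞([0,γ]), ρ_p). -/
/-! A polynomial `P` is its own Taylor series `Σ (P.coeff n * n!) / n! xⁿ`, whose coefficients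
`P.coeff n * n!` take only finitely many values, so every polynomial lies in some `E_F`.
Uniform closeness on `[0, γ]` implies `ρ_p`-closeness, and the theorem follows from the
Weierstrass approximation theorem. -/

open MeasureTheory Set Filter
open scoped ENNReal Topology

noncomputable def rho (a b : ℝ) (p : ℝ≥0∞) (f g : ℝ → ℝ) : ℝ :=
  (eLpNorm (fun x => f x - g x) p (volume.restrict (Icc a b))).toReal

def EFsp (F : Finset ℝ) : Set (ℝ → ℝ) :=
  {f | ContDiff ℝ (⊤ : ℕ∞) f ∧ ∃ a : ℕ → ℝ, (∀ n, a n ∈ F) ∧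
    ∀ x : ℝ, HasSum (fun n : ℕ => a n / (Nat.factorial n : ℝ) * x ^ n) (f x)}

open Polynomial
open scoped Nat

theorem Polynomial.hasSum_coeff_mul_pow {R : Type*} [CommSemiring R] [TopologicalSpace R]
    (P : R[X]) (x : R) : HasSum (fun n => P.coeff n * x ^ n) (P.eval x) := by
  rw [eval_eq_sum_range]
  refine hasSum_sum_of_ne_finset_zero fun n hn => ?_
  rw [coeff_eq_zero_of_natDegree_lt (by simpa using hn), zero_mul]

theorem Polynomial.coeff_mul_factorial_mem (P : ℝ[X]) (n : ℕ) :
    P.coeff n * n ! ∈ ({0, 1} ∪ P.support.image fun k => P.coeff k * k ! : Finset ℝ) := by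
  by_cases h : P.coeff n = 0
  · simp [h]
  · exact Finset.mem_union_right _ (Finset.mem_image_of_mem _ (mem_support_iff.mpr h))

theorem Polynomial.eval_mem_EFsp {P : ℝ[X]} {F : Finset ℝ} (hF : ∀ n, P.coeff n * n ! ∈ F) :
    (fun x => P.eval x) ∈ EFsp F := by
  refine ⟨by simpa using P.contDiff_aeval (R := ℝ) (𝕜 := ℝ) _, fun n => P.coeff n * n !,
    hF, fun x => ?_⟩
  simpa [mul_div_cancel_right₀, Nat.factorial_ne_zero] using P.hasSum_coeff_mul_pow x

theorem rho_le_of_forall_abs_sub_le {a b δ : ℝ} (p : ℝ≥0∞) {f g : ℝ → ℝ} (hδ : 0 ≤ δ)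
    (h : ∀ x ∈ Icc a b, |f x - g x| ≤ δ) :
    rho a b p f g ≤ (volume (Icc a b) ^ p.toReal⁻¹).toReal * δ := by
  have hae : ∀ᵐ x ∂volume.restrict (Icc a b), ‖f x - g x‖ ≤ δ := by
    filter_upwards [ae_restrict_mem measurableSet_Icc] with x hx
    exact h x hx
  have hbound := eLpNorm_le_of_ae_bound (p := p) hae
  rw [Measure.restrict_apply_univ] at hbound
  have hfinite : volume (Icc a b) ^ p.toReal⁻¹ * ENNReal.ofReal δ ≠ ⊤ :=
    ENNReal.mul_ne_top (ENNReal.rpow_ne_top_of_nonneg (by positivity) measure_Icc_lt_top.ne)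
      ENNReal.ofReal_ne_top
  calc rho a b p f g ≤ (volume (Icc a b) ^ p.toReal⁻¹ * ENNReal.ofReal δ).toReal :=
        ENNReal.toReal_mono hfinite hbound
    _ = _ := by rw [ENNReal.toReal_mul, ENNReal.toReal_ofReal hδ]

theorem exists_pos_forall_abs_sub_le_rho_lt (a b : ℝ) (p : ℝ≥0∞) {ε : ℝ} (hε : 0 < ε) :
    ∃ δ > 0, ∀ f g : ℝ → ℝ, (∀ x ∈ Icc a b, |f x - g x| ≤ δ) → rho a b p f g < ε := by
  set M := (volume (Icc a b) ^ p.toReal⁻¹).toReal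
  have hM : 0 ≤ M := ENNReal.toReal_nonneg
  refine ⟨ε / (2 * (M + 1)), by positivity, fun f g h => ?_⟩
  calc rho a b p f g ≤ M * (ε / (2 * (M + 1))) := rho_le_of_forall_abs_sub_le p (by positivity) h
    _ < ε := by
      rw [mul_div_assoc', div_lt_iff₀ (by positivity)]
      nlinarith

theorem stmt4_general (γ : ℝ) (p : ℝ≥0∞) :
    ∀ f : ℝ → ℝ, ContDiff ℝ (⊤ : ℕ∞) f → ∀ ε > (0 : ℝ),
      ∃ F : Finset ℝ, 2 ≤ F.card ∧ ∃ g ∈ EFsp F, rho 0 γ p f g < ε := by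
  intro f hf ε hε
  obtain ⟨δ, hδ, hrho⟩ := exists_pos_forall_abs_sub_le_rho_lt 0 γ p hε
  obtain ⟨P, hP⟩ := exists_polynomial_near_of_continuousOn 0 γ f hf.continuous.continuousOn δ hδ
  refine ⟨{0, 1} ∪ P.support.image fun k => P.coeff k * k !, ?_,
    _, eval_mem_EFsp P.coeff_mul_factorial_mem, hrho _ _ fun x hx => ?_⟩
  · exact (Finset.card_pair zero_ne_one).symm.le.trans
      (Finset.card_le_card Finset.subset_union_left)
  · exact (abs_sub_comm _ _).le.trans (hP x hx).le

/-- Fix `γ > 0` and `1 ≤ p ≤ ∞`. For every smooth `f` on `[0, γ]` and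
every `ε > 0` there is a finite set `F ⊂ ℝ` with `#F ≥ 2` such that the `ρ_p`-distance
from `f` to `E_F` is `< ε`; i.e. some `g ∈ E_F` satisfies `ρ_p(f, g) < ε`, so the union
of the sets `E_F` over finite `F` with `#F ≥ 2` is dense in `(C^∞([0, γ]), ρ_p)`. -/
theorem stmt4 (γ : ℝ) (hγ : 0 < γ) (p : ℝ≥0∞) (hp : 1 ≤ p) :
    ∀ f : ℝ → ℝ, ContDiff ℝ (⊤ : ℕ∞) f → ∀ ε > (0 : ℝ),
      ∃ F : Finset ℝ, 2 ≤ F.card ∧ ∃ g ∈ EFsp F, rho 0 γ p f g < ε :=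
  stmt4_general γ p
end

section
/- Fix γ > 0. For every ε > 0 and every f ∈ E, there exists δ > 0 such that for every g ∈ E with ρ_1(f,g) < δ one has d_E(f,g) < ε. (That is, the identity map from (E, ρ_1) to (E, d_E) is continuous.) -/
open MeasureTheory Set Filter
open scoped ENNReal Topology

/-- A sequence taking values in `{0, 1}`. -/
def IsBinary (a : ℕ → ℝ) : Prop := ∀ n, a n = 0 ∨ a n = 1

/-- The function `x ↦ Σ aₙ/n! xⁿ` attached to a coefficient sequence; elements of `E`
are exactly the functions `fseq a` with `a` binary. -/
noncomputable def fseq (a : ℕ → ℝ) : ℝ → ℝ :=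
  fun x => ∑' n : ℕ, a n / (Nat.factorial n : ℝ) * x ^ n

/-- The metric `d_E` on `E`, expressed via the coefficient sequences:
`d_E(f, g) = Σₙ |aₙ − bₙ|/(n+1)!`. -/
noncomputable def dE (a b : ℕ → ℝ) : ℝ :=
  ∑' n : ℕ, |a n - b n| / (Nat.factorial (n + 1) : ℝ)

/-! If `a` and `b` first differ at index `m`, then near `0` the difference `fseq a - fseq b` is
dominated by its leading term `±xᵐ/m!`: the remaining coefficients are at most `1/m!` in size,
so for `x ≤ 1/3` they contribute at most half of it. Integrating over `[x₀/2, x₀]` bounds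
`ρ₁(fseq a, fseq b)` from below by a positive quantity depending only on `m`, decreasing in `m`.
So a small `ρ₁`-distance forces `a` and `b` to agree below some large `N`, and then
`d_E(a, b) ≤ Σ_{n ≥ N} 1/(n+1)!`, the tail of a convergent series. -/

open Nat

lemma IsBinary.abs_le_one {a : ℕ → ℝ} (ha : IsBinary a) (n : ℕ) : |a n| ≤ 1 := by
  rcases ha n with h | h <;> simp [h]

lemma IsBinary.abs_sub_le_one {a b : ℕ → ℝ} (ha : IsBinary a) (hb : IsBinary b) (n : ℕ) :
    |a n - b n| ≤ 1 := by
  rcases ha n with h | h <;> rcases hb n with h' | h' <;> simp [h, h']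

lemma IsBinary.abs_sub_eq_one {a b : ℕ → ℝ} (ha : IsBinary a) (hb : IsBinary b) {n : ℕ}
    (hne : a n ≠ b n) : |a n - b n| = 1 := by
  rcases ha n with h | h <;> rcases hb n with h' | h' <;> simp_all

lemma abs_div_factorial_mul_pow_le {a : ℕ → ℝ} (ha : ∀ n, |a n| ≤ 1) (x : ℝ) (n : ℕ) :
    ‖a n / n ! * x ^ n‖ ≤ |x| ^ n / n ! := by
  rw [Real.norm_eq_abs, abs_mul, abs_div, abs_pow, Nat.abs_cast, div_mul_eq_mul_div]
  gcongr
  exact mul_le_of_le_one_left (by positivity) (ha n)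

lemma summable_div_factorial_mul_pow {a : ℕ → ℝ} (ha : ∀ n, |a n| ≤ 1) (x : ℝ) :
    Summable (fun n => a n / n ! * x ^ n) :=
  .of_norm_bounded (Real.summable_pow_div_factorial |x|) (abs_div_factorial_mul_pow_le ha x)

lemma summable_one_div_factorial_succ : Summable (fun n => 1 / ((n + 1)! : ℝ)) := by
  simpa only [one_pow] using (summable_nat_add_iff 1).2 (Real.summable_pow_div_factorial 1)

lemma abs_fseq_le_exp {a : ℕ → ℝ} (ha : ∀ n, |a n| ≤ 1) (x : ℝ) :
    |fseq a x| ≤ Real.exp |x| := by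
  rw [Real.exp_eq_exp_ℝ, NormedSpace.exp_eq_tsum_div, ← Real.norm_eq_abs]
  exact tsum_of_norm_bounded (Real.summable_pow_div_factorial |x|).hasSum
    (abs_div_factorial_mul_pow_le ha x)

lemma fseq_sub_fseq {a b : ℕ → ℝ} (ha : ∀ n, |a n| ≤ 1) (hb : ∀ n, |b n| ≤ 1) (x : ℝ) :
    fseq a x - fseq b x = ∑' n, (a n - b n) / n ! * x ^ n := by
  rw [fseq, fseq, ← (summable_div_factorial_mul_pow ha x).tsum_sub
    (summable_div_factorial_mul_pow hb x)]
  simp only [sub_div, sub_mul]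

lemma sub_le_abs_tsum_mul_pow {c : ℕ → ℝ} {m : ℕ} {K x : ℝ} (hc : ∀ n < m, c n = 0)
    (hK : ∀ n, |c n| ≤ K) (hx₀ : 0 ≤ x) (hx₁ : x < 1) :
    |c m| * x ^ m - K * x ^ (m + 1) / (1 - x) ≤ |∑' n, c n * x ^ n| := by
  have hbound : ∀ n, ‖c n * x ^ n‖ ≤ K * x ^ n := fun n => by
    rw [Real.norm_eq_abs, abs_mul, abs_pow, abs_of_nonneg hx₀]
    exact mul_le_mul_of_nonneg_right (hK n) (by positivity)
  have hgeom := summable_geometric_of_lt_one hx₀ hx₁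
  have hsum : Summable (fun n => c n * x ^ n) := .of_norm_bounded (hgeom.mul_left K) hbound
  have hhead : ∑ n ∈ Finset.range (m + 1), c n * x ^ n = c m * x ^ m := by
    rw [Finset.sum_range_succ, Finset.sum_eq_zero fun n hn => by
      rw [hc n (Finset.mem_range.mp hn), zero_mul], zero_add]
  have htail : |∑' k, c (k + (m + 1)) * x ^ (k + (m + 1))| ≤ K * x ^ (m + 1) / (1 - x) := by
    rw [← Real.norm_eq_abs]
    refine tsum_of_norm_bounded ?_ fun k => hbound (k + (m + 1))
    rw [div_eq_mul_inv]
    convert (hasSum_geometric_of_lt_one hx₀ hx₁).mul_left (K * x ^ (m + 1)) using 2 with k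
    · rfl
    · ring
  rw [← hsum.sum_add_tsum_nat_add (m + 1), hhead]
  have := abs_sub_abs_le_abs_add (c m * x ^ m) (∑' k, c (k + (m + 1)) * x ^ (k + (m + 1)))
  rw [abs_mul, abs_pow, abs_of_nonneg hx₀] at this
  linarith

lemma pow_div_le_abs_fseq_sub {a b : ℕ → ℝ} (ha : IsBinary a) (hb : IsBinary b) {m : ℕ}
    (hm : ∀ n < m, a n = b n) (hne : a m ≠ b m) {x : ℝ} (hx₀ : 0 ≤ x) (hx : x ≤ 1 / 3) :
    x ^ m / (2 * m !) ≤ |fseq a x - fseq b x| := by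
  have hfac : (0 : ℝ) < m ! := by positivity
  have hcoeff : ∀ n, |(a n - b n) / n !| ≤ 1 / m ! := fun n => by
    rcases lt_or_ge n m with hn | hn
    · simp [hm n hn]
    · rw [abs_div, Nat.abs_cast]
      exact div_le_div₀ zero_le_one (ha.abs_sub_le_one hb n) hfac
        (by exact_mod_cast Nat.factorial_le hn)
  have key := sub_le_abs_tsum_mul_pow (m := m) (fun n hn => by simp [hm n hn]) hcoeff hx₀
    (by linarith)
  rw [abs_div, ha.abs_sub_eq_one hb hne, Nat.abs_cast] at key
  rw [fseq_sub_fseq ha.abs_le_one hb.abs_le_one]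
  refine le_trans ?_ key
  have hratio : x / (1 - x) ≤ 1 / 2 := by
    rw [div_le_iff₀ (by linarith)]
    linarith
  calc x ^ m / (2 * m !) = x ^ m / m ! * (1 - 1 / 2) := by ring
    _ ≤ x ^ m / m ! * (1 - x / (1 - x)) := by gcongr
    _ = 1 / m ! * x ^ m - 1 / m ! * x ^ (m + 1) / (1 - x) := by ring

lemma mul_sub_le_rho {f g : ℝ → ℝ} {a b s t C M : ℝ} (hst : Icc s t ⊆ Icc a b) (hC : 0 ≤ C)
    (hM : ∀ x ∈ Icc a b, |f x - g x| ≤ M) (h : ∀ x ∈ Icc s t, C ≤ |f x - g x|) :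
    C * (t - s) ≤ rho a b 1 f g := by
  have hfin : eLpNorm (fun x => f x - g x) 1 (volume.restrict (Icc a b)) ≠ ⊤ := by
    refine ne_top_of_le_ne_top ?_ (eLpNorm_le_of_ae_bound
      ((ae_restrict_iff' measurableSet_Icc).2 (ae_of_all _ hM)))
    exact ENNReal.mul_ne_top (by simp) ENNReal.ofReal_ne_top
  rw [rho, ← ENNReal.ofReal_le_iff_le_toReal hfin, eLpNorm_one_eq_lintegral_enorm]
  calc ENNReal.ofReal (C * (t - s)) = ∫⁻ _ in Icc s t, ENNReal.ofReal C := by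
        rw [setLIntegral_const, Real.volume_Icc, ENNReal.ofReal_mul hC]
    _ ≤ ∫⁻ x in Icc s t, ‖f x - g x‖ₑ := by
        refine setLIntegral_mono' measurableSet_Icc fun x hx => ?_
        rw [← ofReal_norm, Real.norm_eq_abs]
        exact ENNReal.ofReal_le_ofReal (h x hx)
    _ ≤ ∫⁻ x in Icc a b, ‖f x - g x‖ₑ := lintegral_mono_set hst

lemma pow_succ_div_le_rho_fseq {γ x₀ : ℝ} (hx₀ : 0 < x₀) (hx₀γ : x₀ ≤ γ) (hx₀3 : x₀ ≤ 1 / 3)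
    {a b : ℕ → ℝ} (ha : IsBinary a) (hb : IsBinary b) {m : ℕ}
    (hm : ∀ n < m, a n = b n) (hne : a m ≠ b m) :
    (x₀ / 2) ^ (m + 1) / (2 * m !) ≤ rho 0 γ 1 (fseq a) (fseq b) := by
  have hbound : ∀ x ∈ Icc 0 γ, |fseq a x - fseq b x| ≤ 2 * Real.exp γ := fun x hx => by
    have hexp : Real.exp |x| ≤ Real.exp γ := by
      rw [abs_of_nonneg hx.1]
      exact Real.exp_le_exp.mpr hx.2
    linarith [abs_sub (fseq a x) (fseq b x), abs_fseq_le_exp ha.abs_le_one x,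
      abs_fseq_le_exp hb.abs_le_one x]
  have hlower : ∀ x ∈ Icc (x₀ / 2) x₀, (x₀ / 2) ^ m / (2 * m !) ≤ |fseq a x - fseq b x| :=
    fun x hx => by
      refine le_trans ?_ (pow_div_le_abs_fseq_sub ha hb hm hne (by linarith [hx.1]) (hx.2.trans hx₀3))
      gcongr
      exact hx.1
  calc (x₀ / 2) ^ (m + 1) / (2 * m !) = (x₀ / 2) ^ m / (2 * m !) * (x₀ - x₀ / 2) := by ring
    _ ≤ rho 0 γ 1 (fseq a) (fseq b) :=
      mul_sub_le_rho (Icc_subset_Icc (by positivity) hx₀γ) (by positivity) hbound hlower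

lemma antitone_pow_succ_div_two_mul_factorial {r : ℝ} (hr₀ : 0 ≤ r) (hr₁ : r ≤ 1) :
    Antitone (fun n => r ^ (n + 1) / (2 * n ! : ℝ)) := fun m n hmn => by
  have hfac : (m ! : ℝ) ≤ n ! := by exact_mod_cast Nat.factorial_le hmn
  exact div_le_div₀ (by positivity) (pow_le_pow_of_le_one hr₀ hr₁ (by omega)) (by positivity)
    (by linarith)

lemma dE_le_tsum_nat_add {a b : ℕ → ℝ} (hab : ∀ n, |a n - b n| ≤ 1) {N : ℕ}
    (h : ∀ n < N, a n = b n) : dE a b ≤ ∑' k, 1 / ((k + N + 1)! : ℝ) := by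
  have hterm : ∀ n, |a n - b n| / ((n + 1)! : ℝ) ≤ 1 / (n + 1)! := fun n => by
    gcongr
    exact hab n
  have hsum : Summable (fun n => |a n - b n| / ((n + 1)! : ℝ)) :=
    .of_nonneg_of_le (fun n => by positivity) hterm summable_one_div_factorial_succ
  rw [dE, ← hsum.sum_add_tsum_nat_add N, Finset.sum_eq_zero fun n hn => by
    rw [h n (Finset.mem_range.mp hn), sub_self, abs_zero, zero_div], zero_add]
  exact Summable.tsum_le_tsum (fun k => hterm (k + N)) ((summable_nat_add_iff N).2 hsum)
    ((summable_nat_add_iff N).2 summable_one_div_factorial_succ)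

lemma exists_first_ne_of_not_forall_lt {α : Type*} {f g : ℕ → α} {N : ℕ}
    (h : ¬ ∀ n < N, f n = g n) : ∃ m < N, (∀ n < m, f n = g n) ∧ f m ≠ g m := by
  classical
  push Not at h
  obtain ⟨n₀, hn₀N, hn₀⟩ := h
  have hex : ∃ n, f n ≠ g n := ⟨n₀, hn₀⟩
  exact ⟨Nat.find hex, (Nat.find_min' hex hn₀).trans_lt hn₀N,
    fun n hn => not_not.1 (Nat.find_min hex hn), Nat.find_spec hex⟩

/-- Fix `γ > 0`. For every `ε > 0` and every `f ∈ E` there is a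
`δ > 0` such that every `g ∈ E` with `ρ_1(f, g) < δ` satisfies `d_E(f, g) < ε`: the
identity map `(E, ρ_1) → (E, d_E)` is continuous. -/
theorem stmt15 (γ : ℝ) (hγ : 0 < γ) :
    ∀ ε > (0 : ℝ), ∀ a : ℕ → ℝ, IsBinary a →
      ∃ δ > (0 : ℝ), ∀ b : ℕ → ℝ, IsBinary b →
        rho 0 γ 1 (fseq a) (fseq b) < δ → dE a b < ε := by
  intro ε hε a ha
  obtain ⟨N, hN⟩ : ∃ N : ℕ, ∑' k, 1 / ((k + N + 1)! : ℝ) < ε :=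
    ((tendsto_sum_nat_add fun n => 1 / ((n + 1)! : ℝ)).eventually (gt_mem_nhds hε)).exists
  set x₀ := min γ (1 / 3)
  have hx₀ : 0 < x₀ := lt_min hγ (by norm_num)
  refine ⟨(x₀ / 2) ^ (N + 1) / (2 * N !), by positivity, fun b hb hρ => ?_⟩
  by_cases hagree : ∀ n < N, a n = b n
  · exact (dE_le_tsum_nat_add (ha.abs_sub_le_one hb) hagree).trans_lt hN
  obtain ⟨m, hmN, hm, hne⟩ := exists_first_ne_of_not_forall_lt hagree
  have hδ := antitone_pow_succ_div_two_mul_factorial (r := x₀ / 2) (by positivity)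
    (by linarith [min_le_right γ (1 / 3)]) hmN.le
  exact absurd hρ (not_lt.2 (hδ.trans
    (pow_succ_div_le_rho_fseq hx₀ (min_le_left _ _) (min_le_right _ _) ha hb hm hne)))
end
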